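/- arXiv:1904.00079 — 2 statements merged into one kernel-verified Lean document; each statement's English description precedes it below -/
import Mathlib

section
/- Let k be a positive integer and let R* ⊆ V be a set maximizing B(R) over all R ⊆ V with |R| ≤ k. Let u ∈ V, let R*_u = subtree(u) ∩ R* and κ*_u = |R*_u|. If anc(u) ∩ R* ≠ ∅, let v be the lowest ancestor of u in R* (v ∈ anc(u) ∩ R* with path(u,v) ∩ R* = ∅); then R*_u maximizes pB_u(R_u ∪ {v}) over all R_u ⊆ subtree(u) with |R_u| = κ*_u. If anc(u) ∩ R* = ∅, then R*_u maximizes pB_u(R_u) over all R_u ⊆ subtree(u) with |R_u| = κ*_u. -/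
open scoped Classical

section TreeDefs

variable {V : Type*}

/-- The set of strict ancestors of `u` in the rooted tree given by `parent`. -/
def ancSet (parent : V → V) (u : V) : Set V :=
  {v | v ≠ u ∧ ∃ n : ℕ, parent^[n] u = v}

/-- The set of nodes of the subtree rooted at `u` (including `u`). -/
def subtreeSet (parent : V → V) (u : V) : Set V :=
  {x | ∃ n : ℕ, parent^[n] x = u}

/-- The set of nodes strictly between `u` and its ancestor `v`. -/
def pathSet (parent : V → V) (u v : V) : Set V :=
  {w | w ∈ ancSet parent u ∧ v ∈ ancSet parent w}

/-- A node is internal if it has at least one child. -/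
def isInternal (parent : V → V) (u : V) : Prop :=
  ∃ w, w ≠ u ∧ parent w = u

/-- `T` is binary with left-child map `lc` and right-child map `rc`. -/
def isBinary (parent lc rc : V → V) : Prop :=
  ∀ u, isInternal parent u →
    lc u ≠ rc u ∧ parent (lc u) = u ∧ parent (rc u) = u ∧
    lc u ≠ u ∧ rc u ≠ u ∧
    ∀ w, w ≠ u → parent w = u → w = lc u ∨ w = rc u

/-- The usefulness indicator `I_q(u|R)` of node `u` for a query with
summed-out variables `Zq`, with respect to the materialized set `R`. -/
noncomputable def useful {α : Type*} (parent : V → V) (vars : V → Set α)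
    (Zq : Set α) (u : V) (R : Set V) : ℝ :=
  if vars u ⊆ Zq ∧ ∀ v ∈ ancSet parent u ∩ R, ¬ vars v ⊆ Zq then 1 else 0

/-- The expected usefulness `E[I(u|R)]` over the query distribution. -/
noncomputable def eInd {α Q : Type*} [Fintype Q] (parent : V → V) (vars : V → Set α)
    (Z : Q → Set α) (Pr : Q → ℝ) (u : V) (R : Set V) : ℝ :=
  ∑ q : Q, Pr q * useful parent vars (Z q) u R

/-- The utility `U(u) = Σ_{x ∈ subtree(u)} c(x)`. -/
noncomputable def util [Fintype V] (parent : V → V) (c : V → ℝ) (u : V) : ℝ :=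
  ∑ x ∈ Finset.univ.filter (fun x => x ∈ subtreeSet parent u), c x

/-- The benefit `B(R) = Σ_{u ∈ R} E[I(u|R)] · U(u)`. -/
noncomputable def benefit [Fintype V] {α Q : Type*} [Fintype Q]
    (parent : V → V) (vars : V → Set α) (Z : Q → Set α) (Pr : Q → ℝ)
    (c : V → ℝ) (R : Finset V) : ℝ :=
  ∑ u ∈ R, eInd parent vars Z Pr u (↑R) * util parent c u

/-- The partial benefit `pB_u(R) = Σ_{w ∈ R ∩ subtree(u)} E[I(w|R)] · U(w)`. -/
noncomputable def pB [Fintype V] {α Q : Type*} [Fintype Q]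
    (parent : V → V) (vars : V → Set α) (Z : Q → Set α) (Pr : Q → ℝ)
    (c : V → ℝ) (u : V) (R : Finset V) : ℝ :=
  ∑ w ∈ R.filter (fun w => w ∈ subtreeSet parent u),
    eInd parent vars Z Pr w (↑R) * util parent c w

end TreeDefs

/-! Exchange argument. Replacing `R*_u` by any `R_u ⊆ subtree(u)` of the same size keeps the
budget `k`, and it does not change what nodes outside `subtree(u)` earn: the usefulness of a node
depends only on its materialized ancestors, and those of a node outside `subtree(u)` lie outside
it. So optimality of `R*` makes `pB_u` of the modified set at most `pB_u(R*)`. Inside `subtree(u)`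
the materialized ancestors of `u` matter only through the lowest one `v`, because variable sets
grow towards the root and a query answered by a higher ancestor is already answered by `v`; this
rewrites both sides as `pB_u(R_u ∪ {v})` and `pB_u(R*_u ∪ {v})`. -/

section Tree

variable {V : Type*} {parent : V → V}

theorem subtreeSet_self (u : V) : u ∈ subtreeSet parent u := ⟨0, rfl⟩

theorem subtreeSet_trans {x y u : V} (hx : x ∈ subtreeSet parent y)
    (hy : y ∈ subtreeSet parent u) : x ∈ subtreeSet parent u := by
  obtain ⟨n, rfl⟩ := hx
  obtain ⟨m, rfl⟩ := hy
  exact ⟨m + n, Function.iterate_add_apply _ _ _ _⟩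

theorem subtreeSet_total {x a b : V} (ha : x ∈ subtreeSet parent a)
    (hb : x ∈ subtreeSet parent b) : a ∈ subtreeSet parent b ∨ b ∈ subtreeSet parent a := by
  obtain ⟨n, rfl⟩ := ha
  obtain ⟨m, rfl⟩ := hb
  rcases le_total n m with h | h
  · exact Or.inl ⟨m - n, by rw [← Function.iterate_add_apply, Nat.sub_add_cancel h]⟩
  · exact Or.inr ⟨n - m, by rw [← Function.iterate_add_apply, Nat.sub_add_cancel h]⟩

/-- A cycle through `a` and `b` would be periodic, yet every orbit ends in the fixed point
`root`; so it must sit at `root`. -/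
theorem subtreeSet_antisymm {root : V} (hroot : parent root = root)
    (hreach : ∀ u, ∃ n : ℕ, parent^[n] u = root) {a b : V}
    (hab : a ∈ subtreeSet parent b) (hba : b ∈ subtreeSet parent a) : a = b := by
  obtain ⟨n, rfl⟩ := hab
  obtain ⟨m, hm⟩ := hba
  rcases Nat.eq_zero_or_pos n with rfl | hn
  · rfl
  have hper : Function.IsPeriodicPt parent (m + n) a := by
    rw [Function.IsPeriodicPt, Function.IsFixedPt, Function.iterate_add_apply, hm]
  obtain ⟨N, hN⟩ := hreach a
  have ha : a = root := by
    have hle : N ≤ N * (m + n) := Nat.le_mul_of_pos_right N (by omega)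
    rw [← (hper.const_mul N).eq, ← Nat.sub_add_cancel hle, Function.iterate_add_apply, hN,
      Function.iterate_fixed hroot]
  rw [ha, Function.iterate_fixed hroot]

theorem notMem_subtreeSet_of_mem_ancSet {root : V} (hroot : parent root = root)
    (hreach : ∀ u, ∃ n : ℕ, parent^[n] u = root) {u v : V} (hv : v ∈ ancSet parent u) :
    v ∉ subtreeSet parent u :=
  fun h => hv.1 (subtreeSet_antisymm hroot hreach h hv.2)

theorem mem_ancSet_of_mem_subtreeSet {root : V} (hroot : parent root = root)
    (hreach : ∀ u, ∃ n : ℕ, parent^[n] u = root) {u v w : V} (hv : v ∈ ancSet parent u)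
    (hw : w ∈ subtreeSet parent u) : v ∈ ancSet parent w :=
  ⟨fun h => notMem_subtreeSet_of_mem_ancSet hroot hreach hv (h ▸ hw),
    subtreeSet_trans hw hv.2⟩

theorem mem_subtreeSet_or_mem_ancSet {u w x : V} (hw : w ∈ subtreeSet parent u)
    (hx : x ∈ ancSet parent w) : x ∈ subtreeSet parent u ∨ x ∈ ancSet parent u := by
  by_cases hxu : x = u
  · exact Or.inl (hxu ▸ subtreeSet_self x)
  · exact (subtreeSet_total hw hx.2).symm.imp id fun h => ⟨hxu, h⟩

theorem notMem_subtreeSet_of_mem_ancSet_of_notMem {u w x : V}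
    (hw : w ∉ subtreeSet parent u) (hx : x ∈ ancSet parent w) : x ∉ subtreeSet parent u :=
  fun h => hw (subtreeSet_trans hx.2 h)

end Tree

section Benefit

variable {V α Q : Type*} [Fintype Q] {parent : V → V} {vars : V → Set α} {Z : Q → Set α}
  {Pr : Q → ℝ}

theorem eInd_eq_of_dominated {w : V} {R S : Set V} (hSR : ancSet parent w ∩ S ⊆ R)
    (hRS : ∀ x ∈ ancSet parent w ∩ R, ∃ y ∈ ancSet parent w ∩ S, vars y ⊆ vars x) :
    eInd parent vars Z Pr w R = eInd parent vars Z Pr w S := by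
  refine Finset.sum_congr rfl fun q _ => congrArg (Pr q * ·) (if_congr ?_ rfl rfl)
  refine and_congr_right fun _ => ⟨fun h y hy hyZ => h y ⟨hy.1, hSR hy⟩ hyZ, fun h x hx hxZ => ?_⟩
  obtain ⟨y, hy, hyx⟩ := hRS x hx
  exact h y hy (hyx.trans hxZ)

theorem eInd_eq_of_inter_ancSet_eq {w : V} {R S : Set V}
    (h : ancSet parent w ∩ R = ancSet parent w ∩ S) :
    eInd parent vars Z Pr w R = eInd parent vars Z Pr w S := by
  simp only [eInd, useful, h]

variable [Fintype V] {c : V → ℝ}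

theorem benefit_eq_pB_add (u : V) (R : Finset V) :
    benefit parent vars Z Pr c R = pB parent vars Z Pr c u R +
      ∑ w ∈ R.filter (fun w => w ∉ subtreeSet parent u),
        eInd parent vars Z Pr w ↑R * util parent c w :=
  (Finset.sum_filter_add_sum_filter_not R _ _).symm

theorem pB_le_pB_of_benefit_le {u : V} {R S : Finset V}
    (hRS : benefit parent vars Z Pr c R ≤ benefit parent vars Z Pr c S)
    (hout : R.filter (fun w => w ∉ subtreeSet parent u) =
      S.filter (fun w => w ∉ subtreeSet parent u)) :
    pB parent vars Z Pr c u R ≤ pB parent vars Z Pr c u S := by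
  have hrest : ∑ w ∈ R.filter (fun w => w ∉ subtreeSet parent u),
        eInd parent vars Z Pr w ↑R * util parent c w =
      ∑ w ∈ S.filter (fun w => w ∉ subtreeSet parent u),
        eInd parent vars Z Pr w ↑S * util parent c w := by
    rw [hout]
    refine Finset.sum_congr rfl fun w hw => congrArg (· * _) (eInd_eq_of_inter_ancSet_eq ?_)
    ext x
    refine and_congr_right fun hx => ?_
    have hxu := notMem_subtreeSet_of_mem_ancSet_of_notMem (Finset.mem_filter.1 hw).2 hx
    simpa [hxu] using Finset.ext_iff.1 hout x
  rw [benefit_eq_pB_add u, benefit_eq_pB_add u, hrest] at hRS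
  linarith

theorem pB_congr {u : V} {R S : Finset V}
    (hin : R.filter (fun w => w ∈ subtreeSet parent u) =
      S.filter (fun w => w ∈ subtreeSet parent u))
    (h : ∀ w ∈ R.filter (fun w => w ∈ subtreeSet parent u),
      eInd parent vars Z Pr w ↑R = eInd parent vars Z Pr w ↑S) :
    pB parent vars Z Pr c u R = pB parent vars Z Pr c u S := by
  rw [pB, pB, ← hin]
  exact Finset.sum_congr rfl fun w hw => by rw [h w hw]

theorem pB_eq_pB_filter_subtreeSet {u : V} {R : Finset V}
    (hR : ancSet parent u ∩ ↑R = ∅) :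
    pB parent vars Z Pr c u R =
      pB parent vars Z Pr c u (R.filter (fun w => w ∈ subtreeSet parent u)) := by
  refine pB_congr (by rw [Finset.filter_filter]; simp) fun w hw =>
    eInd_eq_of_inter_ancSet_eq ?_
  ext x
  simp only [Set.mem_inter_iff, Finset.coe_filter, Set.mem_ofPred_eq, Finset.mem_coe]
  refine and_congr_right fun hx => ⟨fun hxR => ⟨hxR, ?_⟩, And.left⟩
  refine (mem_subtreeSet_or_mem_ancSet (Finset.mem_filter.1 hw).2 hx).resolve_right fun hxu => ?_
  exact (Set.eq_empty_iff_forall_notMem.1 hR) x ⟨hxu, hxR⟩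

theorem pB_eq_pB_insert_filter_subtreeSet [DecidableEq V] {root : V}
    (hroot : parent root = root) (hreach : ∀ u, ∃ n : ℕ, parent^[n] u = root)
    (hvars : ∀ u v : V, v ∈ ancSet parent u → vars u ⊆ vars v)
    {u v : V} {R : Finset V} (hv : v ∈ ancSet parent u) (hvR : v ∈ R)
    (hpath : pathSet parent u v ∩ ↑R = ∅) :
    pB parent vars Z Pr c u R = pB parent vars Z Pr c u
      (insert v (R.filter (fun w => w ∈ subtreeSet parent u))) := by
  have hvu := notMem_subtreeSet_of_mem_ancSet hroot hreach hv
  refine pB_congr (by rw [Finset.filter_insert, if_neg hvu, Finset.filter_filter]; simp)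
    fun w hw => eInd_eq_of_dominated ?_ ?_
  · rintro x ⟨-, hx⟩
    simp only [Finset.coe_insert, Finset.coe_filter, Set.mem_insert_iff, Set.mem_ofPred_eq] at hx
    rcases hx with rfl | ⟨hxR, -⟩
    exacts [hvR, hxR]
  rintro x ⟨hxw, hxR⟩
  have hwu := (Finset.mem_filter.1 hw).2
  have hvw : v ∈ ancSet parent w := mem_ancSet_of_mem_subtreeSet hroot hreach hv hwu
  rcases mem_subtreeSet_or_mem_ancSet hwu hxw with hxu | hxu
  · exact ⟨x, ⟨hxw, by simp [Finset.mem_coe.1 hxR, hxu]⟩, subset_rfl⟩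
  refine ⟨v, ⟨hvw, by simp⟩, ?_⟩
  by_cases hxv : x = v
  · rw [hxv]
  rcases subtreeSet_total hxu.2 hv.2 with hxv' | hvx
  · exact absurd ⟨⟨hxu, fun h => hxv h.symm, hxv'⟩, hxR⟩ (Set.eq_empty_iff_forall_notMem.1 hpath x)
  · exact hvars v x ⟨hxv, hvx⟩

end Benefit

section ReplaceSubtree

variable {V : Type*} [DecidableEq V] {parent : V → V} {u : V} {R Ru : Finset V}

noncomputable def replaceSubtree (parent : V → V) (u : V) (R Ru : Finset V) : Finset V :=
  R.filter (fun w => w ∉ subtreeSet parent u) ∪ Ru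

theorem filter_mem_replaceSubtree (hRu : ↑Ru ⊆ subtreeSet parent u) :
    (replaceSubtree parent u R Ru).filter (fun w => w ∈ subtreeSet parent u) = Ru := by
  ext x
  simp only [replaceSubtree, Finset.mem_filter, Finset.mem_union]
  exact ⟨fun ⟨h, hx⟩ => h.resolve_left fun h' => h'.2 hx, fun h => ⟨Or.inr h, hRu h⟩⟩

theorem filter_notMem_replaceSubtree (hRu : ↑Ru ⊆ subtreeSet parent u) :
    (replaceSubtree parent u R Ru).filter (fun w => w ∉ subtreeSet parent u) =
      R.filter (fun w => w ∉ subtreeSet parent u) := by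
  ext x
  simp only [replaceSubtree, Finset.mem_filter, Finset.mem_union]
  exact ⟨fun ⟨h, hx⟩ => h.resolve_right fun h' => hx (hRu h'), fun h => ⟨Or.inl h, h.2⟩⟩

theorem inter_replaceSubtree (hRu : ↑Ru ⊆ subtreeSet parent u) {s : Set V}
    (hs : ∀ x ∈ s, x ∉ subtreeSet parent u) :
    s ∩ ↑(replaceSubtree parent u R Ru) = s ∩ ↑R := by
  ext x
  refine and_congr_right fun hx => ?_
  simp only [Finset.mem_coe, replaceSubtree, Finset.mem_union, Finset.mem_filter]
  exact ⟨fun h => h.elim And.left fun h' => absurd (hRu h') (hs x hx), fun h => Or.inl ⟨h, hs x hx⟩⟩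

theorem card_replaceSubtree_le
    (hcard : Ru.card = (R.filter (fun w => w ∈ subtreeSet parent u)).card) :
    (replaceSubtree parent u R Ru).card ≤ R.card := by
  have hsplit := Finset.card_filter_add_card_filter_not (s := R) (fun w => w ∈ subtreeSet parent u)
  have := Finset.card_union_le (R.filter (fun w => w ∉ subtreeSet parent u)) Ru
  rw [replaceSubtree]
  omega

end ReplaceSubtree

theorem optimal_substructure_general {V α Q : Type*} [Fintype V] [DecidableEq V] [Fintype Q]
    (root : V) (parent : V → V)
    (hroot : parent root = root)
    (hreach : ∀ u, ∃ n : ℕ, parent^[n] u = root)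
    (vars : V → Set α)
    (hvars : ∀ u v : V, v ∈ ancSet parent u → vars u ⊆ vars v)
    (Z : Q → Set α) (Pr : Q → ℝ)
    (c : V → ℝ)
    (k : ℕ)
    (Rstar : Finset V) (hcard : Rstar.card ≤ k)
    (hopt : ∀ R : Finset V, R.card ≤ k →
      benefit parent vars Z Pr c R ≤ benefit parent vars Z Pr c Rstar)
    (u : V) :
    (∀ v ∈ Rstar, v ∈ ancSet parent u → pathSet parent u v ∩ (↑Rstar : Set V) = ∅ →
      ∀ Ru : Finset V, (↑Ru : Set V) ⊆ subtreeSet parent u →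
        Ru.card = (Rstar.filter (fun w => w ∈ subtreeSet parent u)).card →
        pB parent vars Z Pr c u (insert v Ru) ≤
          pB parent vars Z Pr c u
            (insert v (Rstar.filter (fun w => w ∈ subtreeSet parent u)))) ∧
    (ancSet parent u ∩ (↑Rstar : Set V) = ∅ →
      ∀ Ru : Finset V, (↑Ru : Set V) ⊆ subtreeSet parent u →
        Ru.card = (Rstar.filter (fun w => w ∈ subtreeSet parent u)).card →
        pB parent vars Z Pr c u Ru ≤
          pB parent vars Z Pr c u
            (Rstar.filter (fun w => w ∈ subtreeSet parent u))) := by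
  have hexchange : ∀ Ru : Finset V, ↑Ru ⊆ subtreeSet parent u →
      Ru.card = (Rstar.filter (fun w => w ∈ subtreeSet parent u)).card →
      pB parent vars Z Pr c u (replaceSubtree parent u Rstar Ru) ≤
        pB parent vars Z Pr c u Rstar := fun Ru hRu hRucard =>
    pB_le_pB_of_benefit_le (hopt _ ((card_replaceSubtree_le hRucard).trans hcard))
      (filter_notMem_replaceSubtree hRu)
  have hanc : ∀ x ∈ ancSet parent u, x ∉ subtreeSet parent u := fun _ hx =>
    notMem_subtreeSet_of_mem_ancSet hroot hreach hx
  refine ⟨fun v hvR hv hpath Ru hRu hRucard => ?_, fun hR Ru hRu hRucard => ?_⟩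
  · have hvR' : v ∈ replaceSubtree parent u Rstar Ru :=
      Finset.mem_union_left _ (Finset.mem_filter.2 ⟨hvR, hanc v hv⟩)
    have hpath' : pathSet parent u v ∩ ↑(replaceSubtree parent u Rstar Ru) = ∅ := by
      rwa [inter_replaceSubtree hRu fun x hx => hanc x hx.1]
    have h := hexchange Ru hRu hRucard
    rwa [pB_eq_pB_insert_filter_subtreeSet hroot hreach hvars hv hvR' hpath',
      filter_mem_replaceSubtree hRu,
      pB_eq_pB_insert_filter_subtreeSet hroot hreach hvars hv hvR hpath] at h
  · have hR' : ancSet parent u ∩ ↑(replaceSubtree parent u Rstar Ru) = ∅ := by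
      rwa [inter_replaceSubtree hRu hanc]
    have h := hexchange Ru hRu hRucard
    rwa [pB_eq_pB_filter_subtreeSet hR', filter_mem_replaceSubtree hRu,
      pB_eq_pB_filter_subtreeSet hR] at h

/-- Optimal substructure: if `R*` maximizes the benefit over all
sets of at most `k` nodes, then for every node `u`, the restriction
`R*_u = subtree(u) ∩ R*` maximizes the partial benefit `pB_u(R_u ∪ {v})`
(where `v` is the lowest ancestor of `u` in `R*`, if any) over all
`R_u ⊆ subtree(u)` of cardinality `κ*_u = |R*_u|`. -/
theorem optimal_substructure {V α Q : Type*} [Fintype V] [DecidableEq V] [Fintype Q]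
    (root : V) (parent : V → V)
    (hroot : parent root = root)
    (hreach : ∀ u, ∃ n : ℕ, parent^[n] u = root)
    (vars : V → Set α)
    (hvars : ∀ u v : V, v ∈ ancSet parent u → vars u ⊆ vars v)
    (Z : Q → Set α) (Pr : Q → ℝ)
    (hPr0 : ∀ q, 0 ≤ Pr q) (hPr1 : ∑ q : Q, Pr q = 1)
    (c : V → ℝ) (hc : ∀ x, 0 ≤ c x)
    (k : ℕ) (hk : 0 < k)
    (Rstar : Finset V) (hcard : Rstar.card ≤ k)
    (hopt : ∀ R : Finset V, R.card ≤ k →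
      benefit parent vars Z Pr c R ≤ benefit parent vars Z Pr c Rstar)
    (u : V) :
    (∀ v ∈ Rstar, v ∈ ancSet parent u → pathSet parent u v ∩ (↑Rstar : Set V) = ∅ →
      ∀ Ru : Finset V, (↑Ru : Set V) ⊆ subtreeSet parent u →
        Ru.card = (Rstar.filter (fun w => w ∈ subtreeSet parent u)).card →
        pB parent vars Z Pr c u (insert v Ru) ≤
          pB parent vars Z Pr c u
            (insert v (Rstar.filter (fun w => w ∈ subtreeSet parent u)))) ∧
    (ancSet parent u ∩ (↑Rstar : Set V) = ∅ →
      ∀ Ru : Finset V, (↑Ru : Set V) ⊆ subtreeSet parent u →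
        Ru.card = (Rstar.filter (fun w => w ∈ subtreeSet parent u)).card →
        pB parent vars Z Pr c u Ru ≤
          pB parent vars Z Pr c u
            (Rstar.filter (fun w => w ∈ subtreeSet parent u))) :=
  optimal_substructure_general root parent hroot hreach vars hvars Z Pr c k Rstar hcard hopt u
end

section
/- The benefit function B : 2^V → ℝ≥0 is monotone: for every R ⊆ V and every u ∈ V \ R, B(R ∪ {u}) ≥ B(R). -/
open scoped Classical

/-!
Fix a query. Adding `u` to `R` changes the usefulness of a node `w ∈ R` only if `u` is a
strict ancestor of `w` and `vars u ⊆ Z_q`; such a `w` can lose its contribution `U(w)`.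
The nodes of `R` that are useful are pairwise incomparable, so the subtrees of the nodes
that lose their contribution are disjoint and all lie in `subtree(u)`: the total loss is at
most `U(u)`. If there is any loss, `u` itself becomes useful, since a materialized ancestor of
`u` with `vars ⊆ Z_q` would already have made those nodes useless; so `u` gains `U(u)`.
Averaging over the queries with nonnegative weights gives the theorem.
-/

noncomputable def queryBenefit {V α : Type*} [Fintype V] (parent : V → V) (vars : V → Set α)
    (Zq : Set α) (c : V → ℝ) (S : Finset V) : ℝ :=
  ∑ w ∈ S, useful parent vars Zq w ↑S * util parent c w

section Monotone

variable {V α : Type*} {parent : V → V}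

lemma eq_root_of_iterate_eq_self {root : V} (hroot : parent root = root)
    (hreach : ∀ u, ∃ n : ℕ, parent^[n] u = root) {w : V} {n : ℕ} (hn : n ≠ 0)
    (hw : parent^[n] w = w) : w = root := by
  obtain ⟨k, hk⟩ := hreach w
  have hper : Function.IsPeriodicPt parent (n * k) w :=
    Function.IsPeriodicPt.mul_const (m := n) hw k
  calc w = parent^[n * k - k + k] w := by
        rw [Nat.sub_add_cancel (Nat.le_mul_of_pos_left k (Nat.pos_of_ne_zero hn))]; exact hper.symm
    _ = root := by rw [Function.iterate_add_apply, hk, Function.iterate_fixed hroot]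

lemma mem_ancSet_trans {root : V} (hroot : parent root = root)
    (hreach : ∀ u, ∃ n : ℕ, parent^[n] u = root) {u v w : V}
    (hv : v ∈ ancSet parent u) (hu : u ∈ ancSet parent w) : v ∈ ancSet parent w := by
  obtain ⟨hvu, n, rfl⟩ := hv
  obtain ⟨huw, m, rfl⟩ := hu
  refine ⟨fun hvw => huw ?_, n + m, Function.iterate_add_apply parent n m w⟩
  have hn : n ≠ 0 := by rintro rfl; exact hvu rfl
  have hw : w = root := eq_root_of_iterate_eq_self hroot hreach (n := n + m) (by omega)
    (by rw [Function.iterate_add_apply]; exact hvw)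
  rw [hw, Function.iterate_fixed hroot]

lemma mem_ancSet_or_mem_ancSet_of_mem_subtreeSet {x w₁ w₂ : V}
    (h₁ : x ∈ subtreeSet parent w₁) (h₂ : x ∈ subtreeSet parent w₂) (hne : w₁ ≠ w₂) :
    w₁ ∈ ancSet parent w₂ ∨ w₂ ∈ ancSet parent w₁ := by
  obtain ⟨m, rfl⟩ := h₁
  obtain ⟨n, rfl⟩ := h₂
  rcases le_total m n with h | h
  · exact .inr ⟨hne.symm, n - m, by rw [← Function.iterate_add_apply, Nat.sub_add_cancel h]⟩
  · exact .inl ⟨hne, m - n, by rw [← Function.iterate_add_apply, Nat.sub_add_cancel h]⟩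

lemma util_nonneg [Fintype V] {c : V → ℝ} (hc : ∀ x, 0 ≤ c x) (u : V) :
    0 ≤ util parent c u :=
  Finset.sum_nonneg fun x _ => hc x

lemma sum_util_le_util_of_isAntichain [Fintype V] {c : V → ℝ} (hc : ∀ x, 0 ≤ c x)
    {S : Finset V} {u : V} (hS : ∀ w ∈ S, w ∈ subtreeSet parent u)
    (hanti : IsAntichain (fun a b => a ∈ ancSet parent b) (S : Set V)) :
    ∑ w ∈ S, util parent c w ≤ util parent c u := by
  let T : V → Finset V := fun w => Finset.univ.filter (· ∈ subtreeSet parent w)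
  have hdisj : (S : Set V).PairwiseDisjoint T := by
    intro w₁ hw₁ w₂ hw₂ hne
    refine Finset.disjoint_left.2 fun x hx₁ hx₂ => ?_
    simp only [T, Finset.mem_filter, Finset.mem_univ, true_and] at hx₁ hx₂
    rcases mem_ancSet_or_mem_ancSet_of_mem_subtreeSet hx₁ hx₂ hne with h | h
    · exact hanti hw₁ hw₂ hne h
    · exact hanti hw₂ hw₁ hne.symm h
  calc ∑ w ∈ S, util parent c w = ∑ x ∈ S.biUnion T, c x := (Finset.sum_biUnion hdisj).symm
    _ ≤ util parent c u := by
      refine Finset.sum_le_sum_of_subset_of_nonneg (fun x hx => ?_) fun x _ _ => hc x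
      obtain ⟨w, hwS, hxw⟩ := Finset.mem_biUnion.1 hx
      simp only [T, Finset.mem_filter, Finset.mem_univ, true_and] at hxw ⊢
      obtain ⟨m, hm⟩ := hxw
      obtain ⟨k, hk⟩ := hS w hwS
      exact ⟨k + m, by rw [Function.iterate_add_apply, hm, hk]⟩

variable {vars : V → Set α} {Zq : Set α}

lemma useful_nonneg (w : V) (R : Set V) : 0 ≤ useful parent vars Zq w R := by
  unfold useful; split_ifs <;> norm_num

lemma useful_eq_zero_of_mem_ancSet {w v : V} {R : Set V} (hv : v ∈ ancSet parent w)
    (hvR : v ∈ R) (hvZ : vars v ⊆ Zq) : useful parent vars Zq w R = 0 :=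
  if_neg fun h => h.2 v ⟨hv, hvR⟩ hvZ

lemma useful_insert (w u : V) (R : Set V) :
    useful parent vars Zq w (insert u R) =
      if u ∈ ancSet parent w ∧ vars u ⊆ Zq then 0 else useful parent vars Zq w R := by
  split_ifs with h
  · exact useful_eq_zero_of_mem_ancSet h.1 (Set.mem_insert u R) h.2
  · unfold useful
    simp only [Set.mem_inter_iff, Set.mem_insert_iff]
    refine if_congr (and_congr_right fun _ => forall_congr' fun v => ?_) rfl rfl
    grind

lemma sum_useful_mul_util_le_util [Fintype V] {c : V → ℝ} (hc : ∀ x, 0 ≤ c x)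
    {R S : Finset V} {u : V} (hSR : S ⊆ R) (hS : ∀ w ∈ S, w ∈ subtreeSet parent u) :
    ∑ w ∈ S, useful parent vars Zq w ↑R * util parent c w ≤ util parent c u := by
  let P : V → Prop := fun w => vars w ⊆ Zq ∧ ∀ v ∈ ancSet parent w ∩ ↑R, ¬ vars v ⊆ Zq
  calc ∑ w ∈ S, useful parent vars Zq w ↑R * util parent c w
        = ∑ w ∈ S.filter P, util parent c w := by
          rw [Finset.sum_filter]
          exact Finset.sum_congr rfl fun w _ => by
            rw [useful, ite_mul, one_mul, zero_mul]; congr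
    _ ≤ util parent c u := by
      refine sum_util_le_util_of_isAntichain hc (fun w hw => hS w (Finset.mem_filter.1 hw).1) ?_
      intro w₁ hw₁ w₂ hw₂ _ hanc
      simp only [Finset.coe_filter, Set.mem_ofPred_eq] at hw₁ hw₂
      exact hw₂.2.2 w₁ ⟨hanc, hSR hw₁.1⟩ hw₁.2.1

lemma sum_filter_ancSet_useful_mul_util_le [Fintype V] [DecidableEq V] {root : V}
    (hroot : parent root = root) (hreach : ∀ u, ∃ n : ℕ, parent^[n] u = root)
    {c : V → ℝ} (hc : ∀ x, 0 ≤ c x) (R : Finset V) (u : V) :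
    ∑ w ∈ R.filter (fun w => u ∈ ancSet parent w ∧ vars u ⊆ Zq),
        useful parent vars Zq w ↑R * util parent c w ≤
      useful parent vars Zq u ↑(insert u R) * util parent c u := by
  have hgain : 0 ≤ useful parent vars Zq u ↑(insert u R) * util parent c u :=
    mul_nonneg (useful_nonneg _ _) (util_nonneg hc u)
  by_cases hZu : vars u ⊆ Zq
  swap
  · simpa [hZu] using hgain
  by_cases hblocked : ∃ v ∈ ancSet parent u, v ∈ R ∧ vars v ⊆ Zq
  · obtain ⟨v, hv, hvR, hvZ⟩ := hblocked
    refine le_of_eq_of_le (Finset.sum_eq_zero fun w hw => ?_) hgain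
    rw [useful_eq_zero_of_mem_ancSet (mem_ancSet_trans hroot hreach hv
      (Finset.mem_filter.1 hw).2.1) hvR hvZ, zero_mul]
  · push Not at hblocked
    have huseful : useful parent vars Zq u ↑(insert u R) = 1 := by
      refine if_pos ⟨hZu, fun v ⟨hv, hvR⟩ => ?_⟩
      rcases Finset.mem_insert.1 (Finset.mem_coe.1 hvR) with rfl | hvR
      · exact absurd rfl hv.1
      · exact hblocked v hv hvR
    rw [huseful, one_mul]
    refine sum_useful_mul_util_le_util hc (Finset.filter_subset _ R) fun w hw => ?_
    exact (Finset.mem_filter.1 hw).2.1.2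

lemma queryBenefit_le_insert [Fintype V] [DecidableEq V] {root : V}
    (hroot : parent root = root) (hreach : ∀ u, ∃ n : ℕ, parent^[n] u = root)
    {c : V → ℝ} (hc : ∀ x, 0 ≤ c x) {R : Finset V} {u : V} (hu : u ∉ R) :
    queryBenefit parent vars Zq c R ≤ queryBenefit parent vars Zq c (insert u R) := by
  let A : V → Prop := fun w => u ∈ ancSet parent w ∧ vars u ⊆ Zq
  have hunchanged : ∑ w ∈ R.filter (¬ A ·), useful parent vars Zq w ↑R * util parent c w ≤
      ∑ w ∈ R, useful parent vars Zq w ↑(insert u R) * util parent c w :=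
    calc _ = ∑ w ∈ R.filter (¬ A ·), useful parent vars Zq w ↑(insert u R) * util parent c w :=
          Finset.sum_congr rfl fun w hw => by
            rw [Finset.coe_insert, useful_insert, if_neg (Finset.mem_filter.1 hw).2]
      _ ≤ _ := Finset.sum_le_sum_of_subset_of_nonneg (Finset.filter_subset _ R)
          fun w _ _ => mul_nonneg (useful_nonneg _ _) (util_nonneg hc w)
  calc queryBenefit parent vars Zq c R
      = ∑ w ∈ R.filter A, useful parent vars Zq w ↑R * util parent c w +
          ∑ w ∈ R.filter (¬ A ·), useful parent vars Zq w ↑R * util parent c w :=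
        (Finset.sum_filter_add_sum_filter_not R A _).symm
    _ ≤ useful parent vars Zq u ↑(insert u R) * util parent c u +
          ∑ w ∈ R, useful parent vars Zq w ↑(insert u R) * util parent c w :=
        add_le_add (sum_filter_ancSet_useful_mul_util_le hroot hreach hc R u) hunchanged
    _ = queryBenefit parent vars Zq c (insert u R) := by
        rw [queryBenefit, Finset.sum_insert hu]

lemma benefit_eq_sum_mul_queryBenefit [Fintype V] {Q : Type*} [Fintype Q] (Z : Q → Set α)
    (Pr : Q → ℝ) (c : V → ℝ) (S : Finset V) :
    benefit parent vars Z Pr c S = ∑ q, Pr q * queryBenefit parent vars (Z q) c S := by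
  simp only [benefit, eInd, queryBenefit, Finset.sum_mul, Finset.mul_sum, mul_assoc]
  exact Finset.sum_comm

end Monotone

theorem benefit_monotone_general {V α Q : Type*} [Fintype V] [DecidableEq V] [Fintype Q]
    (root : V) (parent : V → V)
    (hroot : parent root = root)
    (hreach : ∀ u, ∃ n : ℕ, parent^[n] u = root)
    (vars : V → Set α)
    (Z : Q → Set α) (Pr : Q → ℝ)
    (hPr0 : ∀ q, 0 ≤ Pr q)
    (c : V → ℝ) (hc : ∀ x, 0 ≤ c x)
    (R : Finset V) (u : V) (hu : u ∉ R) :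
    benefit parent vars Z Pr c R ≤ benefit parent vars Z Pr c (insert u R) := by
  rw [benefit_eq_sum_mul_queryBenefit, benefit_eq_sum_mul_queryBenefit]
  exact Finset.sum_le_sum fun q _ =>
    mul_le_mul_of_nonneg_left (queryBenefit_le_insert hroot hreach hc hu) (hPr0 q)

/-- the benefit function is monotone: for every `R ⊆ V` and
`u ∈ V \ R`, `B(R ∪ {u}) ≥ B(R)`. -/
theorem benefit_monotone {V α Q : Type*} [Fintype V] [DecidableEq V] [Fintype Q]
    (root : V) (parent : V → V)
    (hroot : parent root = root)
    (hreach : ∀ u, ∃ n : ℕ, parent^[n] u = root)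
    (vars : V → Set α)
    (hvars : ∀ u v : V, v ∈ ancSet parent u → vars u ⊆ vars v)
    (Z : Q → Set α) (Pr : Q → ℝ)
    (hPr0 : ∀ q, 0 ≤ Pr q) (hPr1 : ∑ q : Q, Pr q = 1)
    (c : V → ℝ) (hc : ∀ x, 0 ≤ c x)
    (R : Finset V) (u : V) (hu : u ∉ R) :
    benefit parent vars Z Pr c R ≤ benefit parent vars Z Pr c (insert u R) :=
  benefit_monotone_general root parent hroot hreach vars Z Pr hPr0 c hc R u hu
end
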